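/- Let ε > 0, c ∈ ℝ, and let M be an ε-approximately maximal matching in G with |M| ≤ (1/2 + c)·μ(G). Then M admits a collection of at least (1/2 − 3c − 7ε/2)·μ(G) vertex-disjoint augmenting paths of length three. -/

import Mathlib

/-!
Let `M*` be a maximum matching of `G` and `D` the deleted vertex set; the edges of `M*` avoiding
`D` form a matching of `G - D` of size at least `μ - |D|`, and `M` is maximal in `G - D`.

For a maximal matching `M` and any matching `M*` of a graph with `2|M*| > 3|M|`, more than `|M|`
vertices are covered by `M*` but not by `M`. By maximality their `M*`-partners are matched, so two
of those partners lie on one edge `uv ∈ M`, which yields a 3-augmenting path `u' - u - v - v'`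
with outer edges in `M*`. Deleting its four vertices leaves `M - uv` maximal and costs `M*` at
most two edges, so repeating greedily gives disjoint paths `P` with `2|M*| ≤ 3|M| + |P|`.
With `|M| ≤ (1/2 + c) μ` and `|D| ≤ ε μ` this gives `|P| ≥ (1/2 - 3c - 2ε) μ`.
-/

variable {V : Type*}

/-- A matching of `G`: a finset of edges of `G` that are pairwise vertex-disjoint. -/
def IsMatching (G : SimpleGraph V) (M : Finset (Sym2 V)) : Prop :=
  (∀ e ∈ M, e ∈ G.edgeSet) ∧
    ∀ e ∈ M, ∀ f ∈ M, e ≠ f → ∀ v : V, v ∈ e → v ∉ f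

/-- A vertex is matched by `M` if it belongs to some edge of `M`. -/
def Matched (M : Finset (Sym2 V)) (v : V) : Prop := ∃ e ∈ M, v ∈ e

/-- A maximal matching: every edge of `G` has a matched endpoint. -/
def IsMaximalMatching (G : SimpleGraph V) (M : Finset (Sym2 V)) : Prop :=
  IsMatching G M ∧ ∀ e ∈ G.edgeSet, ∃ v, v ∈ e ∧ Matched M v

/-- μ(G): the maximum matching size of `G`. -/
noncomputable def matchNum (G : SimpleGraph V) : ℕ :=
  sSup {n | ∃ M : Finset (Sym2 V), IsMatching G M ∧ M.card = n}

/-- The subgraph of `G` induced by the vertex set `S` (on the same vertex type). -/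
def restrictVerts (G : SimpleGraph V) (S : Set V) : SimpleGraph V where
  Adj u v := G.Adj u v ∧ u ∈ S ∧ v ∈ S
  symm := ⟨fun u v h => ⟨h.1.symm, h.2.2, h.2.1⟩⟩
  loopless := ⟨fun u h => G.irrefl h.1⟩

/-- `M` is an ε-approximately maximal matching of `G`: it is maximal in a subgraph of `G`
obtained by deleting at most `ε * μ(G)` vertices. -/
def IsAMM (G : SimpleGraph V) (ε : ℝ) (M : Finset (Sym2 V)) : Prop :=
  IsMatching G M ∧ ∃ D : Finset V, (D.card : ℝ) ≤ ε * matchNum G ∧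
    IsMaximalMatching (restrictVerts G ((↑D : Set V)ᶜ)) M

/-- The four vertices of a (candidate) length-three augmenting path `u' - u - v - v'`,
encoded as the tuple `(u', u, v, v')`. -/
def pathVerts [DecidableEq V] (p : V × V × V × V) : Finset V :=
  {p.1, p.2.1, p.2.2.1, p.2.2.2}

/-- `p = (u', u, v, v')` is a length-three augmenting path for the matching `M` in `G`:
`u'` and `v'` are unmatched and distinct, `(u,v) ∈ M`, and the outer edges are
edges of `G` outside `M`. -/
def IsAugPath3 (G : SimpleGraph V) (M : Finset (Sym2 V)) (p : V × V × V × V) : Prop :=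
  p.1 ≠ p.2.2.2 ∧ ¬ Matched M p.1 ∧ ¬ Matched M p.2.2.2 ∧
  s(p.2.1, p.2.2.1) ∈ M ∧
  s(p.1, p.2.1) ∈ G.edgeSet ∧ s(p.1, p.2.1) ∉ M ∧
  s(p.2.2.1, p.2.2.2) ∈ G.edgeSet ∧ s(p.2.2.1, p.2.2.2) ∉ M

/-- The paths in `P` are pairwise vertex-disjoint. -/
def PairwiseDisjointPaths [DecidableEq V] (P : Finset (V × V × V × V)) : Prop :=
  ∀ p ∈ P, ∀ q ∈ P, p ≠ q → Disjoint (pathVerts p) (pathVerts q)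

open Finset

section Basic

variable {G H : SimpleGraph V} {M Mstar : Finset (Sym2 V)}

lemma IsMatching.eq_of_mem_of_mem (hM : IsMatching G M) {e f : Sym2 V} {v : V} (he : e ∈ M)
    (hf : f ∈ M) (hve : v ∈ e) (hvf : v ∈ f) : e = f :=
  by_contra fun hne => hM.2 e he f hf hne v hve hvf

lemma restrictVerts_le (G : SimpleGraph V) (S : Set V) : restrictVerts G S ≤ G :=
  fun _ _ h => h.1

lemma mem_edgeSet_restrictVerts {S : Set V} {e : Sym2 V} :
    e ∈ (restrictVerts G S).edgeSet ↔ e ∈ G.edgeSet ∧ ∀ w ∈ e, w ∈ S := by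
  induction e using Sym2.ind with
  | _ a b => simp [restrictVerts]

lemma IsAugPath3.mono (hHG : H ≤ G) {p : V × V × V × V} (hp : IsAugPath3 H M p) :
    IsAugPath3 G M p := by
  obtain ⟨hne, h₁, h₄, hmid, he₁, hn₁, he₂, hn₂⟩ := hp
  exact ⟨hne, h₁, h₄, hmid, SimpleGraph.edgeSet_mono hHG he₁, hn₁,
    SimpleGraph.edgeSet_mono hHG he₂, hn₂⟩

lemma IsMatching.isAugPath3_of_mem (hstar : IsMatching H Mstar) {e : Sym2 V} {u' v' t₁ t₂ : V}
    (he : e ∈ M) (ht₁ : t₁ ∈ e) (ht₂ : t₂ ∈ e) (hf₁ : s(u', t₁) ∈ Mstar)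
    (hf₂ : s(v', t₂) ∈ Mstar) (hu' : ¬ Matched M u') (hv' : ¬ Matched M v')
    (hne : u' ≠ v') :
    IsAugPath3 H M (u', t₁, t₂, v') := by
  have ht : t₁ ≠ t₂ := by
    rintro rfl
    have hu'f₂ : u' ∈ s(v', t₁) :=
      hstar.eq_of_mem_of_mem hf₁ hf₂ (Sym2.mem_mk_right _ _) (Sym2.mem_mk_right _ _) ▸
        Sym2.mem_mk_left _ _
    rcases Sym2.mem_iff.mp hu'f₂ with rfl | rfl
    exacts [hne rfl, hu' ⟨e, he, ht₁⟩]
  exact ⟨hne, hu', hv', (Sym2.mem_and_mem_iff ht).mp ⟨ht₁, ht₂⟩ ▸ he, hstar.1 _ hf₁,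
    fun h => hu' ⟨_, h, Sym2.mem_mk_left _ _⟩, Sym2.eq_swap ▸ hstar.1 _ hf₂,
    fun h => hv' ⟨_, h, Sym2.mem_mk_right _ _⟩⟩

lemma exists_isMatching_card_eq_matchNum [Fintype V] (G : SimpleGraph V) :
    ∃ M : Finset (Sym2 V), IsMatching G M ∧ #M = matchNum G := by
  classical
  refine Nat.sSup_mem (s := {n | ∃ M : Finset (Sym2 V), IsMatching G M ∧ #M = n})
    ⟨0, ∅, ⟨by simp, by simp⟩, rfl⟩ ⟨Fintype.card (Sym2 V), ?_⟩
  rintro n ⟨M, -, rfl⟩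
  exact card_le_univ M

end Basic

section MatchedVerts

variable [DecidableEq V] {H : SimpleGraph V} {M Mstar : Finset (Sym2 V)}

def matchedVerts (M : Finset (Sym2 V)) : Finset V := M.biUnion Sym2.toFinset

lemma mem_matchedVerts {v : V} : v ∈ matchedVerts M ↔ Matched M v := by
  simp [matchedVerts, Matched]

lemma IsMatching.card_matchedVerts (hM : IsMatching H M) : #(matchedVerts M) = 2 * #M := by
  rw [matchedVerts, card_biUnion, sum_const_nat, mul_comm]
  · intro e he
    exact Sym2.card_toFinset_of_not_isDiag e (SimpleGraph.not_isDiag_of_mem_edgeSet _ (hM.1 e he))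
  · intro e he f hf hne
    simp only [Function.onFun, disjoint_left, Sym2.mem_toFinset]
    exact hM.2 e he f hf hne

lemma IsMaximalMatching.exists_isAugPath3_of_card_lt (hmax : IsMaximalMatching H M)
    (hstar : IsMatching H Mstar) (hlt : #M < #(matchedVerts Mstar \ matchedVerts M)) :
    ∃ p : V × V × V × V, IsAugPath3 H M p ∧ s(p.1, p.2.1) ∈ Mstar ∧
      s(p.2.2.1, p.2.2.2) ∈ Mstar := by
  by_contra hno
  refine hlt.not_ge (card_le_card_of_forall_subsingleton
    (fun u' e => ∃ t ∈ e, s(u', t) ∈ Mstar) ?_ ?_)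
  · intro u' hu'
    obtain ⟨hu'star, hu'M⟩ := mem_sdiff.mp hu'
    obtain ⟨f, hf, hu'f⟩ := mem_matchedVerts.mp hu'star
    obtain ⟨t, rfl⟩ := Sym2.mem_iff_exists.mp hu'f
    obtain ⟨w, hw, e, he, hwe⟩ := hmax.2 _ (hstar.1 _ hf)
    rcases Sym2.mem_iff.mp hw with rfl | rfl
    exacts [absurd (mem_matchedVerts.mpr ⟨e, he, hwe⟩) hu'M, ⟨e, he, w, hwe, hf⟩]
  · rintro e he u' ⟨hu', t₁, ht₁, hf₁⟩ v' ⟨hv', t₂, ht₂, hf₂⟩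
    by_contra hne
    have hunm : ∀ x ∈ matchedVerts Mstar \ matchedVerts M, ¬ Matched M x :=
      fun x hx => mem_matchedVerts.not.mp (mem_sdiff.mp hx).2
    exact hno ⟨_, hstar.isAugPath3_of_mem he ht₁ ht₂ hf₁ hf₂ (hunm u' hu') (hunm v' hv')
      hne, hf₁, Sym2.eq_swap ▸ hf₂⟩

lemma IsMaximalMatching.exists_isAugPath3 (hmax : IsMaximalMatching H M)
    (hstar : IsMatching H Mstar) (hlt : 3 * #M < 2 * #Mstar) :
    ∃ p : V × V × V × V, IsAugPath3 H M p ∧ s(p.1, p.2.1) ∈ Mstar ∧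
      s(p.2.2.1, p.2.2.2) ∈ Mstar := by
  refine hmax.exists_isAugPath3_of_card_lt hstar ?_
  have hsplit := card_inter_add_card_sdiff (matchedVerts Mstar) (matchedVerts M)
  have hinter : #(matchedVerts Mstar ∩ matchedVerts M) ≤ #(matchedVerts M) :=
    card_le_card inter_subset_right
  rw [hstar.card_matchedVerts] at hsplit
  rw [hmax.1.card_matchedVerts] at hinter
  omega

end MatchedVerts

section EdgesAvoiding

variable [DecidableEq V] {H : SimpleGraph V} {M Mstar : Finset (Sym2 V)} {S : Finset V}

def edgesAvoiding (M : Finset (Sym2 V)) (S : Finset V) : Finset (Sym2 V) :=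
  {e ∈ M | ∀ w ∈ e.toFinset, w ∉ S}

lemma mem_edgesAvoiding {e : Sym2 V} :
    e ∈ edgesAvoiding M S ↔ e ∈ M ∧ ∀ w ∈ e, w ∉ S := by
  simp [edgesAvoiding]

lemma edgesAvoiding_subset : edgesAvoiding M S ⊆ M := filter_subset _ _

lemma IsMatching.restrict_edgesAvoiding (hM : IsMatching H M) (S : Finset V) :
    IsMatching (restrictVerts H (↑S)ᶜ) (edgesAvoiding M S) := by
  refine ⟨fun e he => ?_,
    fun e he f hf => hM.2 e (edgesAvoiding_subset he) f (edgesAvoiding_subset hf)⟩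
  obtain ⟨heM, hS⟩ := mem_edgesAvoiding.mp he
  exact mem_edgeSet_restrictVerts.mpr ⟨hM.1 e heM, fun w hw => by simpa using hS w hw⟩

lemma IsMatching.card_le_card_edgesAvoiding_add {T : Finset V} (hM : IsMatching H M)
    (hST : ∀ e ∈ M, ∀ w ∈ e, w ∈ S → ∃ x ∈ e, x ∈ T) :
    #M ≤ #(edgesAvoiding M S) + #T := by
  have hdropped : #(M \ edgesAvoiding M S) ≤ #T := by
    refine card_le_card_of_forall_subsingleton (fun e x => x ∈ e) (fun e he => ?_)
      fun x _ e he f hf =>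
        hM.eq_of_mem_of_mem (mem_sdiff.mp he.1).1 (mem_sdiff.mp hf.1).1 he.2 hf.2
    obtain ⟨heM, hnot⟩ := mem_sdiff.mp he
    simp only [mem_edgesAvoiding, heM, true_and, not_forall, not_not] at hnot
    obtain ⟨w, hw, hwS⟩ := hnot
    obtain ⟨x, hx, hxT⟩ := hST e heM w hw hwS
    exact ⟨x, hxT, hx⟩
  have := card_sdiff_add_card_eq_card (edgesAvoiding_subset (M := M) (S := S))
  omega

lemma IsMaximalMatching.restrict_edgesAvoiding (hM : IsMaximalMatching H M)
    (hS : ∀ e ∈ M, ∀ w ∈ e, w ∈ S → ∀ x ∈ e, x ∈ S) :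
    IsMaximalMatching (restrictVerts H (↑S)ᶜ) (edgesAvoiding M S) := by
  refine ⟨hM.1.restrict_edgesAvoiding S, fun e he => ?_⟩
  obtain ⟨heH, heS⟩ := mem_edgeSet_restrictVerts.mp he
  obtain ⟨w, hw, f, hf, hwf⟩ := hM.2 e heH
  have hwS : w ∉ S := heS w hw
  exact ⟨w, hw, f,
    mem_edgesAvoiding.mpr ⟨hf, fun x hx hxS => hwS (hS f hf x hx hxS w hwf)⟩, hwf⟩

lemma IsAugPath3.disjoint_pathVerts {q : V × V × V × V}
    (hq : IsAugPath3 (restrictVerts H (↑S)ᶜ) M q) : Disjoint (pathVerts q) S := by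
  obtain ⟨-, -, -, -, he₁, -, he₂, -⟩ := hq
  have h₁ := (mem_edgeSet_restrictVerts.mp he₁).2
  have h₂ := (mem_edgeSet_restrictVerts.mp he₂).2
  simp only [pathVerts, disjoint_insert_left, disjoint_singleton_left]
  exact ⟨h₁ _ (Sym2.mem_mk_left _ _), h₁ _ (Sym2.mem_mk_right _ _),
    h₂ _ (Sym2.mem_mk_left _ _), h₂ _ (Sym2.mem_mk_right _ _)⟩

lemma IsAugPath3.of_edgesAvoiding (hS : ∀ e ∈ M, ∀ w ∈ e, w ∈ S → ∀ x ∈ e, x ∈ S)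
    {q : V × V × V × V} (hq : IsAugPath3 (restrictVerts H (↑S)ᶜ) (edgesAvoiding M S) q) :
    IsAugPath3 H M q := by
  have hqS := hq.disjoint_pathVerts
  simp only [pathVerts, disjoint_insert_left, disjoint_singleton_left] at hqS
  obtain ⟨hq₁, hq₂, hq₃, hq₄⟩ := hqS
  have hunmatched : ∀ x ∉ S, ¬ Matched (edgesAvoiding M S) x → ¬ Matched M x :=
    fun x hxS hx ⟨e, he, hxe⟩ =>
      hx ⟨e, mem_edgesAvoiding.mpr ⟨he, fun w hw hwS => hxS (hS e he w hw hwS x hxe)⟩, hxe⟩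
  have hnotin : ∀ a b, a ∉ S → b ∉ S → s(a, b) ∉ edgesAvoiding M S → s(a, b) ∉ M :=
    fun a b ha hb hab h => hab (mem_edgesAvoiding.mpr ⟨h, by simp [ha, hb]⟩)
  obtain ⟨hne, h₁, h₄, hmid, he₁, hn₁, he₂, hn₂⟩ := hq.mono (restrictVerts_le H _)
  exact ⟨hne, hunmatched _ hq₁ h₁, hunmatched _ hq₄ h₄, edgesAvoiding_subset hmid, he₁,
    hnotin _ _ hq₁ hq₂ hn₁, he₂, hnotin _ _ hq₃ hq₄ hn₂⟩

end EdgesAvoiding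

section AugmentingPaths

variable [DecidableEq V] {H : SimpleGraph V} {M Mstar : Finset (Sym2 V)} {p : V × V × V × V}

lemma IsAugPath3.mem_pathVerts_of_mem (hM : IsMatching H M) (hp : IsAugPath3 H M p) :
    ∀ e ∈ M, ∀ w ∈ e, w ∈ pathVerts p → ∀ x ∈ e, x ∈ pathVerts p := by
  obtain ⟨_, h₁, h₄, hmid, -⟩ := hp
  intro e he w hw hwp x hx
  simp only [pathVerts, mem_insert, mem_singleton] at hwp
  rcases hwp with rfl | rfl | rfl | rfl
  · exact absurd ⟨e, he, hw⟩ h₁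
  · rcases Sym2.mem_iff.mp (hM.eq_of_mem_of_mem he hmid hw (Sym2.mem_mk_left _ _) ▸ hx) with
      rfl | rfl <;> simp [pathVerts]
  · rcases Sym2.mem_iff.mp (hM.eq_of_mem_of_mem he hmid hw (Sym2.mem_mk_right _ _) ▸ hx) with
      rfl | rfl <;> simp [pathVerts]
  · exact absurd ⟨e, he, hw⟩ h₄

lemma IsAugPath3.edgesAvoiding_ssubset (hp : IsAugPath3 H M p) :
    edgesAvoiding M (pathVerts p) ⊂ M :=
  filter_ssubset.mpr ⟨_, hp.2.2.2.1, by simp [pathVerts]⟩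

lemma IsMatching.card_le_card_edgesAvoiding_pathVerts_add_two (hstar : IsMatching H Mstar)
    (h₁ : s(p.1, p.2.1) ∈ Mstar) (h₂ : s(p.2.2.1, p.2.2.2) ∈ Mstar) :
    #Mstar ≤ #(edgesAvoiding Mstar (pathVerts p)) + 2 := by
  refine (hstar.card_le_card_edgesAvoiding_add (T := {p.1, p.2.2.2}) ?_).trans
    (Nat.add_le_add_left card_le_two _)
  intro e he w hw hwp
  simp only [pathVerts, mem_insert, mem_singleton] at hwp
  rcases hwp with rfl | rfl | rfl | rfl
  · exact ⟨_, hw, by simp⟩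
  · rw [← hstar.eq_of_mem_of_mem h₁ he (Sym2.mem_mk_right _ _) hw]
    exact ⟨p.1, Sym2.mem_mk_left _ _, by simp⟩
  · rw [← hstar.eq_of_mem_of_mem h₂ he (Sym2.mem_mk_left _ _) hw]
    exact ⟨p.2.2.2, Sym2.mem_mk_right _ _, by simp⟩
  · exact ⟨_, hw, by simp⟩

lemma PairwiseDisjointPaths.insert {P : Finset (V × V × V × V)} (hP : PairwiseDisjointPaths P)
    (hp : ∀ q ∈ P, Disjoint (pathVerts p) (pathVerts q)) :
    PairwiseDisjointPaths (insert p P) := by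
  intro a ha b hb hab
  rcases mem_insert.mp ha with rfl | haP
  · rcases mem_insert.mp hb with rfl | hbP
    exacts [absurd rfl hab, hp b hbP]
  · rcases mem_insert.mp hb with rfl | hbP
    exacts [(hp a haP).symm, hP a haP b hbP hab]

theorem IsMaximalMatching.exists_pairwiseDisjointPaths_isAugPath3 (hmax : IsMaximalMatching H M)
    (hstar : IsMatching H Mstar) :
    ∃ P : Finset (V × V × V × V), (∀ p ∈ P, IsAugPath3 H M p) ∧
      PairwiseDisjointPaths P ∧ 2 * #Mstar ≤ 3 * #M + #P := by
  induction M using Finset.strongInduction generalizing H Mstar with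
  | H M ih =>
  by_cases hle : 2 * #Mstar ≤ 3 * #M
  · exact ⟨∅, by simp, by simp [PairwiseDisjointPaths], by simpa using hle⟩
  obtain ⟨p, hp, h₁, h₂⟩ := hmax.exists_isAugPath3 hstar (by omega)
  have hclosed := hp.mem_pathVerts_of_mem hmax.1
  obtain ⟨P, hP, hdisj, hcount⟩ := ih _ hp.edgesAvoiding_ssubset
    (hmax.restrict_edgesAvoiding hclosed) (hstar.restrict_edgesAvoiding _)
  have hpP : ∀ q ∈ P, Disjoint (pathVerts q) (pathVerts p) :=
    fun q hq => (hP q hq).disjoint_pathVerts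
  have hnotin : p ∉ P := fun h => by simpa [pathVerts] using hpP p h
  refine ⟨insert p P, (forall_mem_insert _ _ _).mpr
      ⟨hp, fun q hq => (hP q hq).of_edgesAvoiding hclosed⟩,
    hdisj.insert fun q hq => (hpP q hq).symm, ?_⟩
  have hMlt := card_lt_card hp.edgesAvoiding_ssubset
  have hMstar := hstar.card_le_card_edgesAvoiding_pathVerts_add_two h₁ h₂
  rw [card_insert_of_notMem hnotin]
  omega

end AugmentingPaths

theorem small_amm_many_aug_paths_general [Fintype V] [DecidableEq V]
    (G : SimpleGraph V) (M : Finset (Sym2 V)) (ε c : ℝ)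
    (hM : IsAMM G ε M)
    (hsize : (M.card : ℝ) ≤ (1/2 + c) * matchNum G) :
    ∃ P : Finset (V × V × V × V),
      (∀ p ∈ P, IsAugPath3 G M p) ∧ PairwiseDisjointPaths P ∧
      (1/2 - 3*c - 7*ε/2) * matchNum G ≤ (P.card : ℝ) := by
  obtain ⟨-, D, hD, hmax⟩ := hM
  obtain ⟨Mopt, hMopt, hcard⟩ := exists_isMatching_card_eq_matchNum G
  obtain ⟨P, hP, hdisj, hcount⟩ :=
    hmax.exists_pairwiseDisjointPaths_isAugPath3 (hMopt.restrict_edgesAvoiding D)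
  have hdrop : #Mopt ≤ #(edgesAvoiding Mopt D) + #D :=
    hMopt.card_le_card_edgesAvoiding_add fun _ _ w hw hwD => ⟨w, hw, hwD⟩
  refine ⟨P, fun p hp => (hP p hp).mono (restrictVerts_le G _), hdisj, ?_⟩
  rw [← hcard] at hsize hD ⊢
  have hcount' : (2 * #(edgesAvoiding Mopt D) : ℝ) ≤ 3 * #M + #P := by exact_mod_cast hcount
  have hdrop' : (#Mopt : ℝ) ≤ #(edgesAvoiding Mopt D) + #D := by exact_mod_cast hdrop
  have hD0 : (0 : ℝ) ≤ #D := Nat.cast_nonneg _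
  linarith

theorem small_amm_many_aug_paths [Fintype V] [DecidableEq V]
    (G : SimpleGraph V) (M : Finset (Sym2 V)) (ε c : ℝ) (hε : 0 < ε)
    (hM : IsAMM G ε M)
    (hsize : (M.card : ℝ) ≤ (1/2 + c) * matchNum G) :
    ∃ P : Finset (V × V × V × V),
      (∀ p ∈ P, IsAugPath3 G M p) ∧ PairwiseDisjointPaths P ∧
      (1/2 - 3*c - 7*ε/2) * matchNum G ≤ (P.card : ℝ) :=
  small_amm_many_aug_paths_general G M ε c hM hsize
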